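/- The element δ := (α/2) ⊗ 1 + 1 ⊗ (α/2) of B = R ⊗_{R^s} R satisfies f·δ = δ·f for every f ∈ R, where f·δ denotes the left R-action and δ·f the right R-action; consequently the map R → B, f ↦ f·δ, is a morphism of (R,R)-bimodules. Moreover, the composite of this map with the multiplication map B → R, a ⊗ b ↦ ab, equals multiplication by α on R. -/

import Mathlib

/-!
Setup as in Statement 11: `k` a field of characteristic `≠ 2`, `h` a finite-dimensional
`k`-vector space with dual `h* = Module.Dual k h`, `α ∈ h*`, `α^∨ ∈ h` with `α α^∨ = 2`,
`R = Sym(h*)` (encoded by its universal property via `j`), `σ` the `k`-algebra automorphism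
of `R` extending the reflection `s β = β - ⟨α^∨, β⟩ • α`, `R^s` its fixed subalgebra, and
`B = R ⊗[R^s] R` the `(R, R)`-bimodule with left action `f • (a ⊗ b) = (f a) ⊗ b` and right
action `(a ⊗ b) • f = a ⊗ (b f)`; since `R^s` is central, the multiplication map
`B → R, a ⊗ b ↦ a b` is well defined.

STATEMENT 12: the element `δ := (α/2) ⊗ 1 + 1 ⊗ (α/2)` of `B` satisfies `f • δ = δ • f` for
every `f ∈ R`; consequently the map `R → B, f ↦ f • δ`, is a morphism of `(R, R)`-bimodules.
Moreover the composite of this map with the multiplication map `B → R` equals multiplication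
by `α` on `R`.
-/

open TensorProduct

universe u

variable {k : Type u} [Field k] {h : Type u} [AddCommGroup h] [Module k h]
  [FiniteDimensional k h] {R : Type u} [CommRing R] [Algebra k R]

/-- `(R, j)` is a symmetric algebra of the `k`-vector space `h*`. -/
def IsSymmetricAlgebraUP (j : Module.Dual k h →ₗ[k] R) : Prop :=
  ∀ (A : Type u) [CommRing A] [Algebra k A] (f : Module.Dual k h →ₗ[k] A),
    ∃! g : R →ₐ[k] A, ∀ β : Module.Dual k h, g (j β) = f β

/-- The subalgebra `R^s` of fixed points of an algebra automorphism `σ` of `R`. -/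
def fixedSubalgebra (σ : R ≃ₐ[k] R) : Subalgebra k R :=
  AlgHom.equalizer (σ : R →ₐ[k] R) (AlgHom.id k R)

/-- The left `R`-action on `B = R ⊗[R^s] R` (multiplication on the left factor). -/
noncomputable def lAct (σ : R ≃ₐ[k] R) (f : R) :
    R ⊗[fixedSubalgebra σ] R →ₗ[fixedSubalgebra σ] R ⊗[fixedSubalgebra σ] R :=
  TensorProduct.map (LinearMap.mulLeft (fixedSubalgebra σ) f) LinearMap.id

/-- The right `R`-action on `B = R ⊗[R^s] R` (multiplication on the right factor). -/
noncomputable def rAct (σ : R ≃ₐ[k] R) (f : R) :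
    R ⊗[fixedSubalgebra σ] R →ₗ[fixedSubalgebra σ] R ⊗[fixedSubalgebra σ] R :=
  TensorProduct.map LinearMap.id (LinearMap.mulLeft (fixedSubalgebra σ) f)

/-- The multiplication map `B = R ⊗[R^s] R → R`, `a ⊗ b ↦ a b`. -/
noncomputable def mulMap (σ : R ≃ₐ[k] R) :
    R ⊗[fixedSubalgebra σ] R →ₗ[fixedSubalgebra σ] R :=
  TensorProduct.lift (LinearMap.mul (fixedSubalgebra σ) R)

/-- The element `δ = (α/2) ⊗ 1 + 1 ⊗ (α/2)` of `B = R ⊗[R^s] R`. -/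
noncomputable def deltaElt (σ : R ≃ₐ[k] R) (j : Module.Dual k h →ₗ[k] R)
    (α : Module.Dual k h) : R ⊗[fixedSubalgebra σ] R :=
  j ((2⁻¹ : k) • α) ⊗ₜ[fixedSubalgebra σ] (1 : R) +
    (1 : R) ⊗ₜ[fixedSubalgebra σ] j ((2⁻¹ : k) • α)

/-! With `a = α/2` we have `s a = -a`, so `a²` is `s`-invariant and hence
`a · δ = a² ⊗ 1 + a ⊗ a = a ⊗ a + 1 ⊗ a² = δ · a`. The `f ∈ R` with `f · δ = δ · f` form a
subalgebra containing `R^s`, and every `β ∈ h*` is `(β + s β)/2 + ⟨α^∨, β⟩ a` with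
`(β + s β)/2 ∈ R^s`; since `R` is generated by `h*`, that subalgebra is all of `R`. Finally
`δ ↦ a + a = α` under multiplication. -/

theorem mem_fixedSubalgebra_iff {σ : R ≃ₐ[k] R} {r : R} : r ∈ fixedSubalgebra σ ↔ σ r = r :=
  Iff.rfl

variable {V : Type u} [AddCommGroup V] [Module k V]

theorem IsSymmetricAlgebraUP.eq_top_of_forall_mem {j : Module.Dual k V →ₗ[k] R}
    (hR : IsSymmetricAlgebraUP j) (S : Subalgebra k R) (hS : ∀ β, j β ∈ S) : S = ⊤ := by
  obtain ⟨g, hg, -⟩ := hR S (j.codRestrict (Subalgebra.toSubmodule S) hS)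
  have hid : S.val.comp g = AlgHom.id k R :=
    (hR R j).unique (fun β => congrArg Subtype.val (hg β)) (fun _ => rfl)
  refine eq_top_iff.2 fun x _ => ?_
  rw [← AlgHom.id_apply (R := k) x, ← hid]
  exact (g x).2

section Bimodule

variable (σ : R ≃ₐ[k] R)

local notation "B" => R ⊗[fixedSubalgebra σ] R

theorem lAct_apply (f : R) (z : B) : lAct σ f z = (f ⊗ₜ 1) * z := by
  induction z using TensorProduct.induction_on with
  | zero => simp
  | tmul a b => rw [Algebra.TensorProduct.tmul_mul_tmul, one_mul]; rfl
  | add x y hx hy => simp_all [mul_add]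

theorem rAct_apply (f : R) (z : B) : rAct σ f z = (1 ⊗ₜ f) * z := by
  induction z using TensorProduct.induction_on with
  | zero => simp
  | tmul a b => rw [Algebra.TensorProduct.tmul_mul_tmul, one_mul]; rfl
  | add x y hx hy => simp_all [mul_add]

theorem lAct_add (f g : R) (z : B) : lAct σ (f + g) z = lAct σ f z + lAct σ g z := by
  simp only [lAct_apply, add_tmul, add_mul]

theorem rAct_add (f g : R) (z : B) : rAct σ (f + g) z = rAct σ f z + rAct σ g z := by
  simp only [rAct_apply, tmul_add, add_mul]

theorem lAct_mul (f g : R) (z : B) : lAct σ (f * g) z = lAct σ f (lAct σ g z) := by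
  rw [lAct_apply, lAct_apply, lAct_apply, ← mul_assoc, Algebra.TensorProduct.tmul_mul_tmul,
    one_mul]

theorem lAct_rAct_comm (f g : R) (z : B) : lAct σ f (rAct σ g z) = rAct σ g (lAct σ f z) := by
  simp only [lAct_apply, rAct_apply, mul_left_comm]

theorem rAct_mul (f g : R) (z : B) : rAct σ (f * g) z = rAct σ f (rAct σ g z) := by
  rw [rAct_apply, rAct_apply, rAct_apply, ← mul_assoc, Algebra.TensorProduct.tmul_mul_tmul,
    one_mul]

theorem tmul_one_eq_one_tmul {r : R} (hr : r ∈ fixedSubalgebra σ) :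
    r ⊗ₜ[fixedSubalgebra σ] (1 : R) = 1 ⊗ₜ r := by
  simpa [Algebra.smul_def] using smul_tmul (⟨r, hr⟩ : fixedSubalgebra σ) (1 : R) (1 : R)

theorem lAct_eq_rAct_of_mem {r : R} (hr : r ∈ fixedSubalgebra σ) (z : B) :
    lAct σ r z = rAct σ r z := by
  rw [lAct_apply, rAct_apply, tmul_one_eq_one_tmul σ hr]

def bimoduleCentralizer (z : B) : Subalgebra k R where
  carrier := {f | lAct σ f z = rAct σ f z}
  mul_mem' {f g} hf hg := by
    simp only [Set.mem_ofPred_eq] at *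
    rw [lAct_mul, hg, lAct_rAct_comm, hf, ← rAct_mul, mul_comm]
  add_mem' {f g} hf hg := by
    simp only [Set.mem_ofPred_eq, lAct_add, rAct_add] at *
    rw [hf, hg]
  algebraMap_mem' c := lAct_eq_rAct_of_mem σ ((fixedSubalgebra σ).algebraMap_mem c) z

theorem mem_bimoduleCentralizer {z : B} {f : R} :
    f ∈ bimoduleCentralizer σ z ↔ lAct σ f z = rAct σ f z :=
  Iff.rfl

theorem fixedSubalgebra_le_bimoduleCentralizer (z : B) :
    fixedSubalgebra σ ≤ bimoduleCentralizer σ z :=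
  fun _ hr => lAct_eq_rAct_of_mem σ hr z

theorem mem_bimoduleCentralizer_self {a : R} (ha : a * a ∈ fixedSubalgebra σ) :
    a ∈ bimoduleCentralizer σ (a ⊗ₜ 1 + 1 ⊗ₜ a) := by
  simp only [mem_bimoduleCentralizer, lAct_apply, rAct_apply, mul_add,
    Algebra.TensorProduct.tmul_mul_tmul, mul_one, one_mul, tmul_one_eq_one_tmul σ ha]
  exact add_comm _ _

theorem mulMap_tmul (x y : R) : mulMap σ (x ⊗ₜ y) = x * y :=
  rfl

theorem mulMap_lAct (f : R) (z : B) : mulMap σ (lAct σ f z) = f * mulMap σ z := by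
  induction z using TensorProduct.induction_on with
  | zero => simp
  | tmul a b => rw [lAct_apply, Algebra.TensorProduct.tmul_mul_tmul, one_mul, mulMap_tmul,
      mulMap_tmul, mul_assoc]
  | add x y hx hy => simp_all [mul_add]

end Bimodule

section Reflection

variable {j : Module.Dual k V →ₗ[k] R} {α : Module.Dual k V} {αv : V} {σ : R ≃ₐ[k] R}

theorem apply_j_smul_eq_neg (hpair : α αv = 2)
    (hσ : ∀ β : Module.Dual k V, σ (j β) = j (β - β αv • α)) (c : k) :
    σ (j (c • α)) = -j (c • α) := by
  rw [hσ, ← map_neg, LinearMap.smul_apply, hpair, smul_eq_mul]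
  congr 1
  module

theorem mul_self_mem_fixedSubalgebra {a : R} (ha : σ a = -a) : a * a ∈ fixedSubalgebra σ := by
  rw [mem_fixedSubalgebra_iff, map_mul, ha, neg_mul_neg]

theorem sub_smul_mem_fixedSubalgebra (h2 : (2 : k) ≠ 0) (hpair : α αv = 2)
    (hσ : ∀ β : Module.Dual k V, σ (j β) = j (β - β αv • α)) (β : Module.Dual k V) :
    j β - β αv • j ((2⁻¹ : k) • α) ∈ fixedSubalgebra σ := by
  rw [mem_fixedSubalgebra_iff, map_sub, map_smul, apply_j_smul_eq_neg hpair hσ, hσ]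
  simp only [map_sub, map_smul]
  match_scalars
  · rfl
  · field_simp
    ring

end Reflection

theorem statement12 (h2 : (2 : k) ≠ 0)
    (j : Module.Dual k h →ₗ[k] R) (hR : IsSymmetricAlgebraUP j)
    (α : Module.Dual k h) (αv : h) (hpair : α αv = 2)
    (σ : R ≃ₐ[k] R) (hσ : ∀ β : Module.Dual k h, σ (j β) = j (β - β αv • α)) :
    -- `f • δ = δ • f` for every `f ∈ R` …
    (∀ f : R, lAct σ f (deltaElt σ j α) = rAct σ f (deltaElt σ j α)) ∧
    -- … consequently `f ↦ f • δ` is a morphism of `(R, R)`-bimodules …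
    (∀ f g : R, lAct σ (f + g) (deltaElt σ j α) =
      lAct σ f (deltaElt σ j α) + lAct σ g (deltaElt σ j α)) ∧
    (∀ f g : R, lAct σ (g * f) (deltaElt σ j α) = lAct σ g (lAct σ f (deltaElt σ j α))) ∧
    (∀ f g : R, lAct σ (f * g) (deltaElt σ j α) = rAct σ g (lAct σ f (deltaElt σ j α))) ∧
    -- … and the composite with the multiplication map `B → R` is multiplication by `α`:
    (∀ f : R, mulMap σ (lAct σ f (deltaElt σ j α)) = j α * f) := by
  set a := j ((2⁻¹ : k) • α)
  have ha : a ∈ bimoduleCentralizer σ (deltaElt σ j α) :=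
    mem_bimoduleCentralizer_self σ
      (mul_self_mem_fixedSubalgebra (apply_j_smul_eq_neg hpair hσ (2⁻¹ : k)))
  have hcentral : bimoduleCentralizer σ (deltaElt σ j α) = ⊤ := by
    refine hR.eq_top_of_forall_mem _ fun β => ?_
    rw [← sub_add_cancel (j β) (β αv • a)]
    exact add_mem (fixedSubalgebra_le_bimoduleCentralizer σ _
      (sub_smul_mem_fixedSubalgebra h2 hpair hσ β)) (Subalgebra.smul_mem _ ha _)
  have hcomm (f : R) : lAct σ f (deltaElt σ j α) = rAct σ f (deltaElt σ j α) :=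
    (mem_bimoduleCentralizer σ).1 (hcentral ▸ Algebra.mem_top)
  have hmul : mulMap σ (deltaElt σ j α) = j α := by
    rw [deltaElt, map_add, mulMap_tmul, mulMap_tmul, mul_one, one_mul, ← map_add, ← two_smul k,
      smul_smul, mul_inv_cancel₀ h2, one_smul]
  refine ⟨hcomm, fun f g => lAct_add σ f g _, fun f g => lAct_mul σ g f _, fun f g => ?_,
    fun f => ?_⟩
  · rw [lAct_mul, hcomm g, lAct_rAct_comm]
  · rw [mulMap_lAct, hmul, mul_comm]
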